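/- If V is an irreducible representation of G over k, then either the restriction V|_H is an irreducible representation of H, or there exist two irreducible H-subrepresentations W₁ and W₂ of V|_H such that V = W₁ ⊕ W₂ as an internal direct sum of H-representations. -/

import Mathlib

/-!
Fix `g ∉ H`. For an `H`-stable submodule `U`, the translate `gU` is again `H`-stable, and since
every element of `G` either lies in `H` or in `gH`, the elements of `G` either fix both `U` and `gU`
or swap them. Hence `U ⊔ gU` and `U ⊓ gU` are `G`-stable, so by irreducibility of `V` the first is
`V` as soon as `U ≠ 0` and the second is `0` as soon as `U ≠ V`. If `V|_H` is reducible, take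
`W` proper, nonzero and `H`-stable: then `V = W ⊕ gW`, and by the modular law every nonzero
`H`-stable `U ≤ W` satisfies `W = W ⊓ (U ⊔ gU) = U ⊔ (W ⊓ gU) = U`. As `g(gW) = W`, the same
argument applies to `gW`.
-/

namespace Representation

variable {k G V : Type*} [Group G]

section Stable

variable [CommSemiring k] [AddCommMonoid V] [Module k V] (ρ : Representation k G V)

def IsStableUnder (K : Subgroup G) (U : Submodule k V) : Prop :=
  ∀ h ∈ K, ∀ v ∈ U, ρ h v ∈ U

variable {ρ} {K : Subgroup G} {U : Submodule k V}

theorem isStableUnder_iff_map_le : ρ.IsStableUnder K U ↔ ∀ h ∈ K, U.map (ρ h) ≤ U := by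
  simp_rw [Submodule.map_le_iff_le_comap]
  rfl

theorem map_map_eq_map_mul (U : Submodule k V) (a b : G) :
    (U.map (ρ a)).map (ρ b) = U.map (ρ (b * a)) := by
  rw [← Submodule.map_comp, map_mul, Module.End.mul_eq_comp]

theorem IsStableUnder.map_eq {h : G} (hU : ρ.IsStableUnder K U) (hh : h ∈ K) :
    U.map (ρ h) = U := by
  refine le_antisymm (isStableUnder_iff_map_le.1 hU h hh) ?_
  calc U = (U.map (ρ h⁻¹)).map (ρ h) := by
        rw [map_map_eq_map_mul, mul_inv_cancel, map_one, Module.End.one_eq_id, Submodule.map_id]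
    _ ≤ U.map (ρ h) := Submodule.map_mono (isStableUnder_iff_map_le.1 hU _ (K.inv_mem hh))

variable {H : Subgroup G} (hH : H.index = 2) {g : G} (hg : g ∉ H)
include hH hg

theorem IsStableUnder.map_eq_map_of_notMem (hU : ρ.IsStableUnder H U) {x : G} (hx : x ∉ H) :
    U.map (ρ x) = U.map (ρ g) := by
  have hgx : g⁻¹ * x ∈ H := by simp [Subgroup.mul_mem_iff_of_index_two hH, hg, hx]
  calc U.map (ρ x) = (U.map (ρ (g⁻¹ * x))).map (ρ g) := by
        rw [map_map_eq_map_mul, mul_inv_cancel_left]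
    _ = U.map (ρ g) := by rw [hU.map_eq hgx]

theorem IsStableUnder.map_of_index_eq_two (hU : ρ.IsStableUnder H U) :
    ρ.IsStableUnder H (U.map (ρ g)) := by
  refine isStableUnder_iff_map_le.2 fun h hh => le_of_eq ?_
  have hhg : h * g ∉ H := by simp [Subgroup.mul_mem_iff_of_index_two hH, hh, hg]
  rw [map_map_eq_map_mul, hU.map_eq_map_of_notMem hH hg hhg]

theorem IsStableUnder.map_map_of_notMem (hU : ρ.IsStableUnder H U) {x : G} (hx : x ∉ H) :
    (U.map (ρ g)).map (ρ x) = U := by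
  have hxg : x * g ∈ H := by simp [Subgroup.mul_mem_iff_of_index_two hH, hg, hx]
  rw [map_map_eq_map_mul, hU.map_eq hxg]

theorem IsStableUnder.sup_map (hU : ρ.IsStableUnder H U) :
    ρ.IsStableUnder ⊤ (U ⊔ U.map (ρ g)) := by
  refine isStableUnder_iff_map_le.2 fun x _ => le_of_eq ?_
  rw [Submodule.map_sup]
  by_cases hx : x ∈ H
  · rw [hU.map_eq hx, (hU.map_of_index_eq_two hH hg).map_eq hx]
  · rw [hU.map_eq_map_of_notMem hH hg hx, hU.map_map_of_notMem hH hg hx, sup_comm]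

theorem IsStableUnder.inf_map (hU : ρ.IsStableUnder H U) :
    ρ.IsStableUnder ⊤ (U ⊓ U.map (ρ g)) := by
  refine isStableUnder_iff_map_le.2 fun x _ => (Submodule.map_inf_le _).trans (le_of_eq ?_)
  by_cases hx : x ∈ H
  · rw [hU.map_eq hx, (hU.map_of_index_eq_two hH hg).map_eq hx]
  · rw [hU.map_eq_map_of_notMem hH hg hx, hU.map_map_of_notMem hH hg hx, inf_comm]

end Stable

section Irreducible

variable [CommRing k] [AddCommGroup V] [Module k V] {ρ : Representation k G V}
  (hirr : ∀ U : Submodule k V, ρ.IsStableUnder ⊤ U → U = ⊥ ∨ U = ⊤)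
  {H : Subgroup G} (hH : H.index = 2) {g : G} (hg : g ∉ H) {U W : Submodule k V}
include hirr hH hg

theorem IsStableUnder.sup_map_eq_top (hU : ρ.IsStableUnder H U) (hU₀ : U ≠ ⊥) :
    U ⊔ U.map (ρ g) = ⊤ :=
  (hirr _ (hU.sup_map hH hg)).resolve_left fun h => hU₀ (eq_bot_mono le_sup_left h)

theorem IsStableUnder.inf_map_eq_bot (hU : ρ.IsStableUnder H U) (hU₁ : U ≠ ⊤) :
    U ⊓ U.map (ρ g) = ⊥ :=
  (hirr _ (hU.inf_map hH hg)).resolve_right fun h => hU₁ (eq_top_mono inf_le_left h)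

theorem IsStableUnder.eq_bot_or_eq_of_le_of_inf_map_eq_bot (hU : ρ.IsStableUnder H U)
    (hUW : U ≤ W) (hW : W ⊓ W.map (ρ g) = ⊥) : U = ⊥ ∨ U = W := by
  refine or_iff_not_imp_left.2 fun hU₀ => Eq.symm ?_
  calc W = (U ⊔ U.map (ρ g)) ⊓ W := by rw [hU.sup_map_eq_top hirr hH hg hU₀, top_inf_eq]
    _ = U ⊔ U.map (ρ g) ⊓ W := sup_inf_assoc_of_le _ hUW
    _ = U := by
      have hle : U.map (ρ g) ⊓ W ≤ W ⊓ W.map (ρ g) :=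
        (inf_le_inf_right W (Submodule.map_mono hUW)).trans_eq (inf_comm _ _)
      rw [eq_bot_mono hle hW, sup_bot_eq]

end Irreducible

end Representation

theorem statement2_general {k G V : Type*} [Field k] [Group G] [AddCommGroup V] [Module k V]
    (H : Subgroup G) (hH : H.index = 2)
    (ρ : Representation k G V)
    (hirr : Nontrivial V ∧
      ∀ U : Submodule k V, (∀ g : G, ∀ v ∈ U, ρ g v ∈ U) → U = ⊥ ∨ U = ⊤) :
    -- either the restriction to `H` is irreducible
    (Nontrivial V ∧
      ∀ U : Submodule k V, (∀ h ∈ H, ∀ v ∈ U, ρ h v ∈ U) → U = ⊥ ∨ U = ⊤) ∨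
    -- or `V` is the internal direct sum of two irreducible `H`-subrepresentations
    (∃ W₁ W₂ : Submodule k V,
      (∀ h ∈ H, ∀ v ∈ W₁, ρ h v ∈ W₁) ∧
      (∀ h ∈ H, ∀ v ∈ W₂, ρ h v ∈ W₂) ∧
      IsCompl W₁ W₂ ∧
      (W₁ ≠ ⊥ ∧ ∀ U : Submodule k V, U ≤ W₁ →
          (∀ h ∈ H, ∀ v ∈ U, ρ h v ∈ U) → U = ⊥ ∨ U = W₁) ∧
      (W₂ ≠ ⊥ ∧ ∀ U : Submodule k V, U ≤ W₂ →
          (∀ h ∈ H, ∀ v ∈ U, ρ h v ∈ U) → U = ⊥ ∨ U = W₂)) := by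
  obtain ⟨hnt, hGirr⟩ := hirr
  by_cases hres : ∀ U : Submodule k V, ρ.IsStableUnder H U → U = ⊥ ∨ U = ⊤
  · exact Or.inl ⟨hnt, hres⟩
  push Not at hres
  obtain ⟨W, hW, hW₀, hW₁⟩ := hres
  obtain ⟨g, hg⟩ := SetLike.exists_not_mem_of_ne_top H fun h => by
    simp [h, Subgroup.index_top] at hH
  have hirr' : ∀ U : Submodule k V, ρ.IsStableUnder ⊤ U → U = ⊥ ∨ U = ⊤ :=
    fun U hU => hGirr U fun x => hU x (Subgroup.mem_top x)
  have hWg : ρ.IsStableUnder H (W.map (ρ g)) := hW.map_of_index_eq_two hH hg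
  have hgWg : (W.map (ρ g)).map (ρ g) = W := hW.map_map_of_notMem hH hg hg
  have hdisj : W ⊓ W.map (ρ g) = ⊥ := hW.inf_map_eq_bot hirr' hH hg hW₁
  have hdisj' : W.map (ρ g) ⊓ (W.map (ρ g)).map (ρ g) = ⊥ := by rw [hgWg, inf_comm, hdisj]
  refine Or.inr ⟨W, W.map (ρ g), hW, hWg,
    ⟨disjoint_iff.2 hdisj, codisjoint_iff.2 (hW.sup_map_eq_top hirr' hH hg hW₀)⟩,
    ⟨hW₀, fun U hUW (hU : ρ.IsStableUnder H U) =>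
      hU.eq_bot_or_eq_of_le_of_inf_map_eq_bot hirr' hH hg hUW hdisj⟩,
    ⟨fun h => hW₀ (by rw [← hgWg, h, Submodule.map_bot]), fun U hUW (hU : ρ.IsStableUnder H U) =>
      hU.eq_bot_or_eq_of_le_of_inf_map_eq_bot hirr' hH hg hUW hdisj'⟩⟩

/-- If `V` is an irreducible representation of `G` over `k` and `H` is a
normal subgroup of `G` of index 2, then either the restriction `V|_H` is irreducible as a
representation of `H`, or there exist two irreducible `H`-subrepresentations `W₁`, `W₂`
of `V|_H` such that `V = W₁ ⊕ W₂` as an internal direct sum of `H`-representations. -/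
theorem statement2 {k G V : Type*} [Field k] [Group G] [AddCommGroup V] [Module k V]
    (H : Subgroup G) [H.Normal] (hH : H.index = 2)
    (ρ : Representation k G V)
    (hirr : Nontrivial V ∧
      ∀ U : Submodule k V, (∀ g : G, ∀ v ∈ U, ρ g v ∈ U) → U = ⊥ ∨ U = ⊤) :
    -- either the restriction to `H` is irreducible
    (Nontrivial V ∧
      ∀ U : Submodule k V, (∀ h ∈ H, ∀ v ∈ U, ρ h v ∈ U) → U = ⊥ ∨ U = ⊤) ∨
    -- or `V` is the internal direct sum of two irreducible `H`-subrepresentations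
    (∃ W₁ W₂ : Submodule k V,
      (∀ h ∈ H, ∀ v ∈ W₁, ρ h v ∈ W₁) ∧
      (∀ h ∈ H, ∀ v ∈ W₂, ρ h v ∈ W₂) ∧
      IsCompl W₁ W₂ ∧
      (W₁ ≠ ⊥ ∧ ∀ U : Submodule k V, U ≤ W₁ →
          (∀ h ∈ H, ∀ v ∈ U, ρ h v ∈ U) → U = ⊥ ∨ U = W₁) ∧
      (W₂ ≠ ⊥ ∧ ∀ U : Submodule k V, U ≤ W₂ →
          (∀ h ∈ H, ∀ v ∈ U, ρ h v ∈ U) → U = ⊥ ∨ U = W₂)) :=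
  statement2_general H hH ρ hirr
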